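/- Fix K ≥ 1, W > 0, weights w_1, …, w_K > 0 with w_0 = 0, normalized noise powers η_0 ≥ η_1 ≥ … ≥ η_K > 0, M ≥ 1, P_max > 0, and a budget 0 < P̄ ≤ P_max. With f_l(x) = W·(w_l·log₂(x + η_l) − w_{l−1}·log₂(x + η_{l−1})) and x_{K+1} = 0, let y = (y_1, …, y_K) maximize Σ_{l=1}^{K} f_l(x_l) over {P̄ ≥ x_1 ≥ … ≥ x_K ≥ 0, |{l : x_l > x_{l+1}}| ≤ M}, and let i be the largest index with y_1 = y_2 = … = y_i. Then y_1 = … = y_i = P̄, and the vector x defined by x_l = P_max for l ≤ i and x_l = y_l for l > i maximizes Σ_{l=1}^{K} f_l(x_l) over {P_max ≥ x_1 ≥ … ≥ x_K ≥ 0, |{l : x_l > x_{l+1}}| ≤ M, x_1 = x_2 = … = x_i}; consequently y_l = min{x_l, P̄} for every l. -/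

import Mathlib

/-!
Write `F_k(t) = W w_k log₂(t + η_k)`, so that `∑_{l ∈ (a, b]} f_l = F_b - F_a`. Summation by
parts turns a change of a monotone block of coordinates into a sum of increments of differences
`F_n - F_k`, whose signs are governed by the marginal rates `F_k' ∝ w_k / (t + η_k)`.

Raising the constant head `y_1 = … = y_i` to `P` gains `F_i(P) - F_i(y_1)`, so `y_1 = P`.
Optimality of `y` against raising `y_{i+1}, …, y_n` to `P` then shows, by induction on `n`, that
user `n`'s rate is at most user `i`'s on `[P, ∞)`. Finally, a competitor `z` with constant head
is truncated at `P`: the truncation is feasible for budget `P`, the head loses at most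
`F_i(P_max) - F_i(P)` (which is exactly what `x` gains over `y`), and by the rate comparison the
coordinates above `P` lose nothing.
-/

/-- `f_{q,q'}(y) = W·(w_{q'}·log₂(y + η_{q'}) − w_{q−1}·log₂(y + η_{q−1}))`. -/
noncomputable def fqq (W : ℝ) (w η : ℕ → ℝ) (q q' : ℕ) (y : ℝ) : ℝ :=
  W * (w q' * Real.logb 2 (y + η q') - w (q - 1) * Real.logb 2 (y + η (q - 1)))

/-- The chain set `C(P) = {x : P ≥ x 1 ≥ … ≥ x K ≥ 0}` (only coordinates `1, …, K` matter). -/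
def chainSet (K : ℕ) (P : ℝ) : Set (ℕ → ℝ) :=
  {x | x 1 ≤ P ∧ (∀ l, 1 ≤ l → l < K → x (l + 1) ≤ x l) ∧ 0 ≤ x K}

/-- The single-carrier objective `∑_{l=1}^{K} f_l(x_l)` with `f_l = f_{l,l}`. -/
noncomputable def objSC (K : ℕ) (W : ℝ) (w η : ℕ → ℝ) (x : ℕ → ℝ) : ℝ :=
  ∑ l ∈ Finset.Icc 1 K, fqq W w η l l (x l)

/-- Number of active users `|{l : x_l > x_{l+1}}|`, with the convention `x_{K+1} = 0`. -/
noncomputable def activeCount (K : ℕ) (x : ℕ → ℝ) : ℕ :=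
  {l : ℕ | 1 ≤ l ∧ l ≤ K ∧ (if l = K then 0 else x (l + 1)) < x l}.ncard

/-- SIC-constrained feasible set: chain constraints plus at most `M` active users. -/
def sicSet (K M : ℕ) (P : ℝ) : Set (ℕ → ℝ) :=
  {x | x ∈ chainSet K P ∧ activeCount K x ≤ M}

open Finset

lemma antitoneOn_Icc_of_succ_le {α : Type*} [Preorder α] {f : ℕ → α} {a K : ℕ}
    (h : ∀ l, a ≤ l → l < K → f (l + 1) ≤ f l) : AntitoneOn f (Set.Icc a K) := by
  rintro b ⟨hab, -⟩ c ⟨-, hcK⟩ hbc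
  induction c, hbc using Nat.le_induction with
  | base => exact le_rfl
  | succ c hbc ih => exact (h c (hab.trans hbc) hcK).trans (ih (by omega))

lemma hasDerivAt_mul_log_add_sub_mul_log_add (u v α β : ℝ) {t : ℝ} (hα : 0 < t + α)
    (hβ : 0 < t + β) :
    HasDerivAt (fun s => u * Real.log (s + α) - v * Real.log (s + β))
      (u / (t + α) - v / (t + β)) t := by
  have hα' := (((hasDerivAt_id t).add_const α).log hα.ne').const_mul u
  have hβ' := (((hasDerivAt_id t).add_const β).log hβ.ne').const_mul v
  simpa [div_eq_mul_inv, Pi.sub_def] using hα'.sub hβ'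

/-- Integrated form of the pointwise comparison `v / (t + β) ≤ u / (t + α)` of derivatives. -/
lemma mul_log_sub_le_of_le {u v α β a b : ℝ} (hα : 0 < a + α) (hβ : 0 < a + β) (hab : a ≤ b)
    (h : ∀ t ∈ Set.Icc a b, v * (t + α) ≤ u * (t + β)) :
    v * (Real.log (b + β) - Real.log (a + β)) ≤ u * (Real.log (b + α) - Real.log (a + α)) := by
  have hderiv : ∀ t ∈ Set.Icc a b, HasDerivAt
      (fun s => u * Real.log (s + α) - v * Real.log (s + β)) (u / (t + α) - v / (t + β)) t :=
    fun t ht => hasDerivAt_mul_log_add_sub_mul_log_add u v α β (by linarith [ht.1])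
      (by linarith [ht.1])
  have hmono := monotoneOn_of_hasDerivWithinAt_nonneg (convex_Icc a b)
    (fun t ht => (hderiv t ht).continuousAt.continuousWithinAt)
    (fun t ht => (hderiv t (Set.Ioo_subset_Icc_self (by simpa using ht))).hasDerivWithinAt)
    (fun t ht => by
      rw [interior_Icc] at ht
      rw [sub_nonneg, div_le_div_iff₀ (by linarith [ht.1]) (by linarith [ht.1])]
      exact h t (Set.Ioo_subset_Icc_self ht))
  have := hmono (Set.left_mem_Icc.2 hab) (Set.right_mem_Icc.2 hab) hab
  linarith

lemma mul_log_sub_lt_of_lt {u v α β a b : ℝ} (hα : 0 < a + α) (hβ : 0 < a + β) (hab : a < b)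
    (h : ∀ t ∈ Set.Ioo a b, v * (t + α) < u * (t + β)) :
    v * (Real.log (b + β) - Real.log (a + β)) < u * (Real.log (b + α) - Real.log (a + α)) := by
  have hderiv : ∀ t ∈ Set.Icc a b, HasDerivAt
      (fun s => u * Real.log (s + α) - v * Real.log (s + β)) (u / (t + α) - v / (t + β)) t :=
    fun t ht => hasDerivAt_mul_log_add_sub_mul_log_add u v α β (by linarith [ht.1])
      (by linarith [ht.1])
  have hmono := strictMonoOn_of_hasDerivWithinAt_pos (convex_Icc a b)
    (fun t ht => (hderiv t ht).continuousAt.continuousWithinAt)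
    (fun t ht => (hderiv t (Set.Ioo_subset_Icc_self (by simpa using ht))).hasDerivWithinAt)
    (fun t ht => by
      rw [interior_Icc] at ht
      rw [sub_pos, div_lt_div_iff₀ (by linarith [ht.1]) (by linarith [ht.1])]
      exact h t ht)
  have := hmono (Set.left_mem_Icc.2 hab.le) (Set.right_mem_Icc.2 hab.le) hab
  linarith

lemma mul_add_le_mul_add_of_le_above {u v α β s t : ℝ} (hu : 0 ≤ u) (hα : 0 ≤ α) (hβα : β ≤ α)
    (hs : 0 ≤ s) (hst : s ≤ t) (ht : u * (t + β) ≤ v * (t + α)) : u * (s + β) ≤ v * (s + α) := by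
  rcases le_total u v with huv | hvu
  · nlinarith [mul_le_mul_of_nonneg_left hβα hu]
  · nlinarith

lemma mul_add_lt_mul_add_of_lt_above {u v α β s t : ℝ} (hu : 0 ≤ u) (hα : 0 ≤ α) (hβα : β ≤ α)
    (hs : 0 < s) (hst : s ≤ t) (ht : u * (t + β) < v * (t + α)) : u * (s + β) < v * (s + α) := by
  rcases lt_trichotomy u v with huv | rfl | hvu
  · nlinarith [mul_le_mul_of_nonneg_left hβα hu]
  · nlinarith
  · nlinarith

lemma sum_Ioc_sub_telescope_bot {M : Type*} [AddCommGroup M] (g : ℕ → ℕ → M) (a n : ℕ) :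
    ∑ l ∈ Ioc a n, (g l l - g l a) = ∑ k ∈ Ico a n, ∑ l ∈ Ioc k n, (g l (k + 1) - g l k) := by
  rw [← sum_comm' (s := Ioc a n) (t := fun l => Ico a l)
    (by intro l k; simp only [mem_Ioc, mem_Ico]; omega)]
  refine sum_congr rfl fun l hl => ?_
  exact (sum_Ico_sub (g l) (mem_Ioc.1 hl).1.le).symm

lemma sum_Ioc_sub_telescope_top {M : Type*} [AddCommGroup M] (g : ℕ → ℕ → M) (a n : ℕ) :
    ∑ l ∈ Ioc a n, (g l (n + 1) - g l l) = ∑ k ∈ Ioc a n, ∑ l ∈ Ioc a k, (g l (k + 1) - g l k) := by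
  rw [← sum_comm' (s := Ioc a n) (t := fun l => Ico l (n + 1))
    (by intro l k; simp only [mem_Ioc, mem_Ico]; omega)]
  refine sum_congr rfl fun l hl => ?_
  exact (sum_Ico_sub (g l) (by have := (mem_Ioc.1 hl).2; omega)).symm

section Potential

variable {W : ℝ} {w η : ℕ → ℝ}

noncomputable def potential (W : ℝ) (w η : ℕ → ℝ) (k : ℕ) (t : ℝ) : ℝ :=
  W * (w k * Real.logb 2 (t + η k))

lemma sum_fqq_Ioc (t : ℝ) {a b : ℕ} (hab : a ≤ b) :
    ∑ l ∈ Ioc a b, fqq W w η l l t = potential W w η b t - potential W w η a t := by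
  induction b, hab using Nat.le_induction with
  | base => simp
  | succ b hab ih =>
    rw [sum_Ioc_succ_top hab, ih]
    simp only [fqq, potential, Nat.add_sub_cancel]
    ring

lemma sum_fqq_Ioc_zero (hw0 : w 0 = 0) (t : ℝ) (n : ℕ) :
    ∑ l ∈ Ioc 0 n, fqq W w η l l t = potential W w η n t := by
  simp [sum_fqq_Ioc t (Nat.zero_le n), potential, hw0]

lemma sum_fqq_Ioc_zero_of_eq (hw0 : w 0 = 0) {x : ℕ → ℝ} {n : ℕ} {c : ℝ}
    (hx : ∀ l, 1 ≤ l → l ≤ n → x l = c) :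
    ∑ l ∈ Ioc 0 n, fqq W w η l l (x l) = potential W w η n c := by
  rw [← sum_fqq_Ioc_zero hw0]
  exact sum_congr rfl fun l hl => by rw [hx l (mem_Ioc.1 hl).1 (mem_Ioc.1 hl).2]

lemma potential_le_potential (hW : 0 ≤ W) {k : ℕ} (hwk : 0 ≤ w k) {a b : ℝ}
    (ha : 0 < a + η k) (hab : a ≤ b) : potential W w η k a ≤ potential W w η k b := by
  unfold potential
  gcongr
  linarith

lemma potential_lt_potential (hW : 0 < W) {k : ℕ} (hwk : 0 < w k) {a b : ℝ}
    (ha : 0 < a + η k) (hab : a < b) : potential W w η k a < potential W w η k b :=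
  mul_lt_mul_of_pos_left
    (mul_lt_mul_of_pos_left (Real.logb_lt_logb one_lt_two ha (by linarith)) hwk) hW

lemma potential_sub_eq (j : ℕ) (a b : ℝ) :
    potential W w η j b - potential W w η j a
      = W / Real.log 2 * (w j * (Real.log (b + η j) - Real.log (a + η j))) := by
  simp only [potential, Real.logb]
  ring

lemma potential_sub_le_potential_sub (hW : 0 ≤ W) {j k : ℕ} {a b : ℝ} (hj : 0 < a + η j)
    (hk : 0 < a + η k) (hab : a ≤ b) (h : ∀ t ∈ Set.Icc a b, w j * (t + η k) ≤ w k * (t + η j)) :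
    potential W w η j b - potential W w η j a ≤ potential W w η k b - potential W w η k a := by
  rw [potential_sub_eq, potential_sub_eq]
  have : 0 ≤ W / Real.log 2 := div_nonneg hW (Real.log_pos one_lt_two).le
  exact mul_le_mul_of_nonneg_left (mul_log_sub_le_of_le hk hj hab h) this

lemma potential_sub_lt_potential_sub (hW : 0 < W) {j k : ℕ} {a b : ℝ} (hj : 0 < a + η j)
    (hk : 0 < a + η k) (hab : a < b) (h : ∀ t ∈ Set.Ioo a b, w j * (t + η k) < w k * (t + η j)) :
    potential W w η j b - potential W w η j a < potential W w η k b - potential W w η k a := by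
  rw [potential_sub_eq, potential_sub_eq]
  exact mul_lt_mul_of_pos_left (mul_log_sub_lt_of_lt hk hj hab h)
    (div_pos hW (Real.log_pos one_lt_two))

lemma sum_fqq_sub_eq_sum_bot (x : ℕ → ℝ) (a n : ℕ) :
    ∑ l ∈ Ioc a n, (fqq W w η l l (x l) - fqq W w η l l (x a))
      = ∑ k ∈ Ico a n, ((potential W w η n (x (k + 1)) - potential W w η n (x k))
          - (potential W w η k (x (k + 1)) - potential W w η k (x k))) := by
  rw [sum_Ioc_sub_telescope_bot (fun l k => fqq W w η l l (x k))]
  refine sum_congr rfl fun k hk => ?_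
  have hkn := (mem_Ico.1 hk).2.le
  rw [sum_sub_distrib, sum_fqq_Ioc _ hkn, sum_fqq_Ioc _ hkn]
  ring

lemma sum_fqq_sub_eq_sum_top (x : ℕ → ℝ) (a n : ℕ) :
    ∑ l ∈ Ioc a n, (fqq W w η l l (x (n + 1)) - fqq W w η l l (x l))
      = ∑ k ∈ Ioc a n, ((potential W w η k (x (k + 1)) - potential W w η k (x k))
          - (potential W w η a (x (k + 1)) - potential W w η a (x k))) := by
  rw [sum_Ioc_sub_telescope_top (fun l k => fqq W w η l l (x k))]
  refine sum_congr rfl fun k hk => ?_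
  have hak := (mem_Ioc.1 hk).1.le
  rw [sum_sub_distrib, sum_fqq_Ioc _ hak, sum_fqq_Ioc _ hak]
  ring

lemma sum_fqq_sub_lt_zero (hW : 0 < W) {x : ℕ → ℝ} {a n : ℕ} (han : a < n)
    (hx : ∀ k ∈ Ico a n, x (k + 1) ≤ x k)
    (hpos : ∀ k ∈ Ico a n, 0 < x (k + 1) + η k ∧ 0 < x (k + 1) + η n)
    (hcmp : ∀ k ∈ Ico a n, ∀ t ∈ Set.Icc (x (k + 1)) (x k), w k * (t + η n) ≤ w n * (t + η k))
    (hlt : x (a + 1) < x a)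
    (hcmp_lt : ∀ t ∈ Set.Ioo (x (a + 1)) (x a), w a * (t + η n) < w n * (t + η a)) :
    ∑ l ∈ Ioc a n, (fqq W w η l l (x l) - fqq W w η l l (x a)) < 0 := by
  rw [sum_fqq_sub_eq_sum_bot]
  refine sum_neg' (fun k hk => ?_) ⟨a, mem_Ico.2 ⟨le_rfl, han⟩, ?_⟩
  · have := potential_sub_le_potential_sub (W := W) hW.le (hpos k hk).1 (hpos k hk).2 (hx k hk)
      (hcmp k hk)
    linarith
  · have ha := mem_Ico.2 ⟨le_rfl, han⟩
    have := potential_sub_lt_potential_sub (W := W) hW (hpos a ha).1 (hpos a ha).2 hlt hcmp_lt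
    linarith

lemma sum_fqq_sub_nonpos (hW : 0 ≤ W) {x : ℕ → ℝ} {a n : ℕ}
    (hx : ∀ k ∈ Ioc a n, x (k + 1) ≤ x k)
    (hpos : ∀ k ∈ Ioc a n, 0 < x (k + 1) + η k ∧ 0 < x (k + 1) + η a)
    (hcmp : ∀ k ∈ Ioc a n, ∀ t ∈ Set.Icc (x (k + 1)) (x k), w k * (t + η a) ≤ w a * (t + η k)) :
    ∑ l ∈ Ioc a n, (fqq W w η l l (x l) - fqq W w η l l (x (n + 1))) ≤ 0 := by
  have hsum : 0 ≤ ∑ l ∈ Ioc a n, (fqq W w η l l (x (n + 1)) - fqq W w η l l (x l)) := by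
    rw [sum_fqq_sub_eq_sum_top]
    refine sum_nonneg fun k hk => ?_
    have := potential_sub_le_potential_sub (W := W) hW (hpos k hk).1 (hpos k hk).2 (hx k hk)
      (hcmp k hk)
    linarith
  rw [← neg_nonneg, ← sum_neg_distrib]
  simpa using hsum

end Potential

section Feasibility

variable {K M : ℕ} {P : ℝ} {x : ℕ → ℝ}

/-- The set `U'(x)` of active users. -/
def activeSet (K : ℕ) (x : ℕ → ℝ) : Set ℕ :=
  {l | 1 ≤ l ∧ l ≤ K ∧ (if l = K then 0 else x (l + 1)) < x l}

lemma activeCount_eq_ncard : activeCount K x = (activeSet K x).ncard := rfl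

lemma activeSet_finite : (activeSet K x).Finite :=
  (Set.finite_Icc 1 K).subset fun _ hl => ⟨hl.1, hl.2.1⟩

lemma mem_activeSet_of_lt {l : ℕ} (hl : 1 ≤ l) (hlK : l < K) (h : x (l + 1) < x l) :
    l ∈ activeSet K x :=
  ⟨hl, hlK.le, by rwa [if_neg hlK.ne]⟩

lemma mem_activeSet_self (hK : 1 ≤ K) (h : 0 < x K) : K ∈ activeSet K x :=
  ⟨hK, le_rfl, by rwa [if_pos rfl]⟩

lemma antitoneOn_of_mem_chainSet (hx : x ∈ chainSet K P) : AntitoneOn x (Set.Icc 1 K) :=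
  antitoneOn_Icc_of_succ_le hx.2.1

lemma nonneg_of_mem_chainSet (hx : x ∈ chainSet K P) {l : ℕ} (hl : 1 ≤ l) (hlK : l ≤ K) : 0 ≤ x l :=
  hx.2.2.trans (antitoneOn_of_mem_chainSet hx ⟨hl, hlK⟩ ⟨hl.trans hlK, le_rfl⟩ hlK)

lemma le_of_mem_chainSet (hx : x ∈ chainSet K P) {l : ℕ} (hl : 1 ≤ l) (hlK : l ≤ K) : x l ≤ P :=
  (antitoneOn_of_mem_chainSet hx ⟨le_rfl, hl.trans hlK⟩ ⟨hl, hlK⟩ hl).trans hx.1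

def setHead (n : ℕ) (c : ℝ) (x : ℕ → ℝ) : ℕ → ℝ := fun l => if l ≤ n then c else x l

lemma setHead_of_le {n l : ℕ} (h : l ≤ n) (c : ℝ) : setHead n c x l = c := if_pos h

lemma setHead_of_lt {n l : ℕ} (h : n < l) (c : ℝ) : setHead n c x l = x l := if_neg (not_le.2 h)

lemma setHead_mem_chainSet (hx : x ∈ chainSet K P) {n : ℕ} (hn : 1 ≤ n) (hnK : n ≤ K) {c : ℝ}
    (hc : x 1 ≤ c) : setHead n c x ∈ chainSet K c := by
  refine ⟨by simp [setHead, hn], fun l hl hlK => ?_, ?_⟩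
  · by_cases hln : l + 1 ≤ n
    · simp [setHead, hln, (Nat.le_succ l).trans hln]
    · by_cases hln' : l ≤ n
      · have hle : x (l + 1) ≤ x 1 :=
          antitoneOn_of_mem_chainSet hx ⟨le_rfl, by omega⟩ ⟨by omega, hlK⟩ (by omega)
        simpa [setHead, hln, hln'] using hle.trans hc
      · simpa [setHead, hln, hln'] using hx.2.1 l hl hlK
  · simp only [setHead]
    split_ifs
    · exact (nonneg_of_mem_chainSet hx le_rfl (hn.trans hnK)).trans hc
    · exact hx.2.2

lemma activeSet_setHead_subset {n : ℕ} (hnK : n ≤ K) (c : ℝ) :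
    activeSet K (setHead n c x) ⊆ insert n {l | l ∈ activeSet K x ∧ n < l} := by
  rintro l ⟨hl, hlK, hact⟩
  rcases lt_trichotomy l n with hln | rfl | hnl
  · simp [setHead, show l ≠ K by omega, show l + 1 ≤ n by omega, hln.le] at hact
  · exact Set.mem_insert _ _
  · refine Or.inr ⟨⟨hl, hlK, ?_⟩, hnl⟩
    simpa [setHead, show ¬ l ≤ n by omega, show ¬ l + 1 ≤ n by omega] using hact

lemma activeCount_setHead_le {n j : ℕ} (hnK : n ≤ K) (hj : j ∈ activeSet K x) (hjn : j ≤ n)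
    (c : ℝ) : activeCount K (setHead n c x) ≤ activeCount K x := by
  have hsub : {l | l ∈ activeSet K x ∧ n < l} ⊆ activeSet K x \ {j} :=
    fun l hl => ⟨hl.1, by rintro rfl; exact absurd hl.2 (not_lt.2 hjn)⟩
  calc activeCount K (setHead n c x)
      ≤ (insert n {l | l ∈ activeSet K x ∧ n < l}).ncard :=
        Set.ncard_le_ncard (activeSet_setHead_subset hnK c)
          ((activeSet_finite.subset fun _ hl => hl.1).insert n)
    _ ≤ {l | l ∈ activeSet K x ∧ n < l}.ncard + 1 := Set.ncard_insert_le _ _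
    _ ≤ (activeSet K x \ {j}).ncard + 1 :=
        Nat.add_le_add_right (Set.ncard_le_ncard hsub (activeSet_finite.sdiff)) 1
    _ = activeCount K x := Set.ncard_sdiff_singleton_add_one hj activeSet_finite

lemma activeCount_setHead_self_le_one (c : ℝ) : activeCount K (setHead K c x) ≤ 1 := by
  have hsub : activeSet K (setHead K c x) ⊆ {K} := fun l hl => by
    simpa using (activeSet_setHead_subset le_rfl c hl).resolve_right fun h =>
      absurd h.2 (not_lt.2 h.1.2.1)
  simpa [activeCount_eq_ncard] using Set.ncard_le_ncard hsub

lemma min_mem_chainSet {P' : ℝ} (hx : x ∈ chainSet K P') (hP : 0 ≤ P) :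
    (fun l => min (x l) P) ∈ chainSet K P :=
  ⟨min_le_right _ _, fun l hl hlK => min_le_min_right P (hx.2.1 l hl hlK), le_min hx.2.2 hP⟩

lemma activeSet_min_subset : activeSet K (fun l => min (x l) P) ⊆ activeSet K x := by
  rintro l ⟨hl, hlK, hact⟩
  refine ⟨hl, hlK, ?_⟩
  split_ifs at hact ⊢
  · exact hact.trans_le (min_le_left _ _)
  · by_contra hle
    exact hact.not_ge (min_le_min_right P (not_lt.1 hle))

lemma min_mem_sicSet {P' : ℝ} (hx : x ∈ sicSet K M P') (hP : 0 ≤ P) :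
    (fun l => min (x l) P) ∈ sicSet K M P :=
  ⟨min_mem_chainSet hx.1 hP,
    (Set.ncard_le_ncard activeSet_min_subset activeSet_finite).trans hx.2⟩

end Feasibility

section Objective

variable {K : ℕ} {W : ℝ} {w η : ℕ → ℝ}

lemma objSC_sub_objSC_eq_sum_Ioc {x y : ℕ → ℝ} {a b : ℕ} (hbK : b ≤ K)
    (h : ∀ l ∈ Ioc 0 K, l ∉ Ioc a b → x l = y l) :
    objSC K W w η x - objSC K W w η y
      = ∑ l ∈ Ioc a b, (fqq W w η l l (x l) - fqq W w η l l (y l)) := by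
  rw [objSC, objSC, ← sum_sub_distrib, show Icc 1 K = Ioc 0 K from Icc_add_one_left_eq_Ioc 0 K]
  refine (sum_subset (Ioc_subset_Ioc (Nat.zero_le a) hbK) fun l hl hab => ?_).symm
  rw [h l hl hab, sub_self]

lemma objSC_setHead_sub_objSC {y : ℕ → ℝ} {a n : ℕ} {c : ℝ} (hnK : n ≤ K)
    (hyc : ∀ l, 1 ≤ l → l ≤ a → y l = c) :
    objSC K W w η (setHead n c y) - objSC K W w η y
      = ∑ l ∈ Ioc a n, (fqq W w η l l c - fqq W w η l l (y l)) := by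
  rw [objSC_sub_objSC_eq_sum_Ioc hnK fun l hl hl' => ?_]
  · exact sum_congr rfl fun l hl => by rw [setHead_of_le (mem_Ioc.1 hl).2]
  · obtain ⟨hl0, -⟩ := mem_Ioc.1 hl
    rcases le_or_gt l n with hln | hnl
    · rw [setHead_of_le hln, hyc l hl0 (by simp only [mem_Ioc] at hl'; omega)]
    · exact setHead_of_lt hnl c

end Objective

section Optimum

variable {K M : ℕ} {W : ℝ} {w η : ℕ → ℝ} {P : ℝ} {y : ℕ → ℝ} {i : ℕ}

lemma head_eq_budget (hM : 1 ≤ M) (hW : 0 < W) (hw0 : w 0 = 0) (hwi : 0 < w i)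
    (hηi : 0 < η i) (hy : y ∈ sicSet K M P)
    (hymax : ∀ z ∈ sicSet K M P, objSC K W w η z ≤ objSC K W w η y)
    (hi1 : 1 ≤ i) (hiK : i ≤ K) (hconst : ∀ l, 1 ≤ l → l ≤ i → y l = y 1)
    (hdrop : i < K → y (i + 1) < y i) : y 1 = P := by
  by_contra hne
  have hlt : y 1 < P := lt_of_le_of_ne hy.1.1 hne
  have hfeas : setHead i P y ∈ sicSet K M P := by
    refine ⟨setHead_mem_chainSet hy.1 hi1 hiK hy.1.1, ?_⟩
    rcases hiK.lt_or_eq with hiK' | rfl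
    · exact (activeCount_setHead_le hiK (mem_activeSet_of_lt hi1 hiK' (hdrop hiK')) le_rfl
        P).trans hy.2
    · exact (activeCount_setHead_self_le_one P).trans hM
  have hgain : objSC K W w η (setHead i P y) - objSC K W w η y
      = potential W w η i P - potential W w η i (y 1) := by
    rw [objSC_setHead_sub_objSC (a := 0) hiK fun l hl hl0 => absurd hl (by omega),
      sum_sub_distrib, sum_fqq_Ioc_zero hw0, sum_fqq_Ioc_zero_of_eq hw0 hconst]
  have hy10 : 0 ≤ y 1 := nonneg_of_mem_chainSet hy.1 le_rfl (hi1.trans hiK)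
  linarith [hymax _ hfeas, potential_lt_potential (η := η) hW hwi (by linarith) hlt]

/-- Summation by parts: raising `y_{i+1}, …, y_n` to `P` gains, on each `[y_{k+1}, y_k]`, the
excess of user `n`'s marginal rate over user `k`'s. -/
lemma objSC_lt_objSC_setHead (hW : 0 < W) (hη_pos : ∀ l, l ≤ K → 0 < η l)
    (hy : y ∈ chainSet K P) {n : ℕ} (hi1 : 1 ≤ i) (hin : i < n) (hnK : n ≤ K)
    (hyP : ∀ l, 1 ≤ l → l ≤ i → y l = P) (hdrop : y (i + 1) < P)
    (hrate_i : ∀ s, 0 < s → s ≤ P → w i * (s + η n) < w n * (s + η i))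
    (hrate : ∀ l, i ≤ l → l < n → ∀ s, 0 ≤ s → s ≤ P → w l * (s + η n) ≤ w n * (s + η l)) :
    objSC K W w η y < objSC K W w η (setHead n P y) := by
  have hyi : y i = P := hyP i hi1 le_rfl
  have hy0 : ∀ l, 1 ≤ l → l ≤ K → 0 ≤ y l := fun l => nonneg_of_mem_chainSet hy
  have hloss : ∑ l ∈ Ioc i n, (fqq W w η l l (y l) - fqq W w η l l (y i)) < 0 := by
    refine sum_fqq_sub_lt_zero hW hin (fun k hk => ?_) (fun k hk => ?_) (fun k hk s hs => ?_)
      (hyi ▸ hdrop) (fun s hs => ?_)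
    · obtain ⟨hik, hkn⟩ := mem_Ico.1 hk
      exact hy.2.1 k (hi1.trans hik) (hkn.trans_le hnK)
    · obtain ⟨hik, hkn⟩ := mem_Ico.1 hk
      have := hy0 (k + 1) (by omega) (by omega)
      exact ⟨by linarith [hη_pos k (by omega)], by linarith [hη_pos n hnK]⟩
    · obtain ⟨hik, hkn⟩ := mem_Ico.1 hk
      exact hrate k hik hkn s ((hy0 (k + 1) (by omega) (by omega)).trans hs.1)
        (hs.2.trans (le_of_mem_chainSet hy (hi1.trans hik) (by omega)))
    · exact hrate_i s ((hy0 (i + 1) (by omega) (by omega)).trans_lt hs.1) (hyi ▸ hs.2.le)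
  have hgain : objSC K W w η (setHead n P y) - objSC K W w η y
      = -∑ l ∈ Ioc i n, (fqq W w η l l (y l) - fqq W w η l l (y i)) := by
    rw [objSC_setHead_sub_objSC hnK hyP, ← sum_neg_distrib, hyi]
    simp only [neg_sub]
  linarith

/-- If user `n`'s marginal rate exceeded user `i`'s somewhere on `[P, ∞)`, then, inductively, it
would dominate those of users `i, …, n - 1` on `[0, P]`, strictly so that of user `i`,
contradicting `objSC_lt_objSC_setHead`. -/
lemma marginal_le_of_optimal (hW : 0 < W) (hw : ∀ l, 1 ≤ l → l ≤ K → 0 < w l)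
    (hη_pos : ∀ l, l ≤ K → 0 < η l) (hη_anti : AntitoneOn η (Set.Icc 0 K)) (hP : 0 < P)
    (hy : y ∈ sicSet K M P) (hymax : ∀ z ∈ sicSet K M P, objSC K W w η z ≤ objSC K W w η y)
    (hi1 : 1 ≤ i) (hyP : ∀ l, 1 ≤ l → l ≤ i → y l = P) (hiact : i ∈ activeSet K y) :
    ∀ n, i ≤ n → n ≤ K → ∀ t, P ≤ t → w n * (t + η i) ≤ w i * (t + η n) := by
  intro n
  induction n using Nat.strong_induction_on with
  | _ n IH =>
  intro hin hnK t ht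
  rcases hin.eq_or_lt with rfl | hin
  · exact le_rfl
  by_contra hfail
  have hiK : i < K := hin.trans_le hnK
  have hPη : ∀ l, l ≤ K → 0 < P + η l := fun l hl => by linarith [hη_pos l hl]
  have hηle : ∀ l, l ≤ n → η n ≤ η l := fun l hl =>
    hη_anti ⟨Nat.zero_le l, hl.trans hnK⟩ ⟨Nat.zero_le n, hnK⟩ hl
  have hrate_i : ∀ s, 0 < s → s ≤ P → w i * (s + η n) < w n * (s + η i) := fun s hs hsP =>
    mul_add_lt_mul_add_of_lt_above (hw i hi1 hiK.le).le (hη_pos i hiK.le).le (hηle i hin.le) hs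
      (hsP.trans ht) (not_le.1 hfail)
  have hrate : ∀ l, i ≤ l → l < n → ∀ s, 0 ≤ s → s ≤ P → w l * (s + η n) ≤ w n * (s + η l) := by
    intro l hil hln s hs hsP
    have hlK : l ≤ K := hln.le.trans hnK
    have hli : w l / (P + η l) ≤ w i / (P + η i) :=
      (div_le_div_iff₀ (hPη l hlK) (hPη i hiK.le)).2 (IH l hln hil hlK P le_rfl)
    have hin' : w i / (P + η i) < w n / (P + η n) :=
      (div_lt_div_iff₀ (hPη i hiK.le) (hPη n hnK)).2 (hrate_i P hP le_rfl)
    exact mul_add_le_mul_add_of_le_above (hw l (hi1.trans hil) hlK).le (hη_pos l hlK).le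
      (hηle l hln.le) hs hsP ((div_lt_div_iff₀ (hPη l hlK) (hPη n hnK)).1 (hli.trans_lt hin')).le
  have hdrop : y (i + 1) < P := by simpa [activeSet, hiK.ne, hyP i hi1 le_rfl] using hiact.2.2
  have hfeas : setHead n P y ∈ sicSet K M P :=
    ⟨setHead_mem_chainSet hy.1 (hi1.trans hin.le) hnK hy.1.1,
      (activeCount_setHead_le hnK hiact hin.le P).trans hy.2⟩
  exact (hymax _ hfeas).not_gt
    (objSC_lt_objSC_setHead hW hη_pos hy.1 hi1 hin hnK hyP hdrop hrate_i hrate)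

lemma sum_fqq_max_sub_nonpos (hW : 0 ≤ W) (hη_pos : ∀ l, l ≤ K → 0 < η l) (hP : 0 < P)
    (hmarg : ∀ n, i ≤ n → n ≤ K → ∀ t, P ≤ t → w n * (t + η i) ≤ w i * (t + η n))
    {Pmax : ℝ} {z : ℕ → ℝ} (hz : z ∈ chainSet K Pmax) :
    ∑ l ∈ Ioc i K, (fqq W w η l l (max (z l) P) - fqq W w η l l P) ≤ 0 := by
  -- `u (K + 1) = P` is the reference value for the summation by parts
  set u : ℕ → ℝ := fun l => if l ≤ K then max (z l) P else P with hu
  have huP : ∀ l, P ≤ u l := fun l => by simp only [hu]; split_ifs <;> simp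
  have hsum : ∑ l ∈ Ioc i K, (fqq W w η l l (u l) - fqq W w η l l (u (K + 1))) ≤ 0 := by
    refine sum_fqq_sub_nonpos hW (fun k hk => ?_) (fun k hk => ?_) (fun k hk t ht => ?_)
    · obtain ⟨hik, hkK⟩ := mem_Ioc.1 hk
      simp only [hu, if_pos hkK]
      split_ifs with hk1
      · exact max_le_max_right P (hz.2.1 k (by omega) (by omega))
      · exact le_max_right _ _
    · obtain ⟨hik, hkK⟩ := mem_Ioc.1 hk
      exact ⟨by linarith [huP (k + 1), hη_pos k hkK],
        by linarith [huP (k + 1), hη_pos i (by omega)]⟩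
    · obtain ⟨hik, hkK⟩ := mem_Ioc.1 hk
      exact hmarg k hik.le hkK t ((huP (k + 1)).trans ht.1)
  refine le_of_eq_of_le (sum_congr rfl fun l hl => ?_) hsum
  simp [hu, (mem_Ioc.1 hl).2]

lemma objSC_le_objSC_setHead (hW : 0 < W) (hw0 : w 0 = 0) (hwi : 0 < w i)
    (hη_pos : ∀ l, l ≤ K → 0 < η l) (hP : 0 < P) {Pmax : ℝ} (hPle : P ≤ Pmax)
    (hymax : ∀ z ∈ sicSet K M P, objSC K W w η z ≤ objSC K W w η y)
    (hiK : i ≤ K) (hyP : ∀ l, 1 ≤ l → l ≤ i → y l = P)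
    (hmarg : ∀ n, i ≤ n → n ≤ K → ∀ t, P ≤ t → w n * (t + η i) ≤ w i * (t + η n))
    {z : ℕ → ℝ} (hz : z ∈ sicSet K M Pmax) (hzconst : ∀ l, 1 ≤ l → l ≤ i → z l = z 1) :
    objSC K W w η z ≤ objSC K W w η (setHead i Pmax y) := by
  have hlift : objSC K W w η (setHead i Pmax y) - objSC K W w η y
      = potential W w η i Pmax - potential W w η i P := by
    rw [objSC_setHead_sub_objSC (a := 0) hiK fun l hl hl0 => absurd hl (by omega),
      sum_sub_distrib, sum_fqq_Ioc_zero hw0, sum_fqq_Ioc_zero_of_eq hw0 hyP]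
  have htrunc : objSC K W w η z - objSC K W w η (fun l => min (z l) P)
      = ∑ l ∈ Ioc 0 K, (fqq W w η l l (max (z l) P) - fqq W w η l l P) := by
    rw [objSC_sub_objSC_eq_sum_Ioc (a := 0) le_rfl fun l hl hl' => absurd hl hl']
    refine sum_congr rfl fun l _ => ?_
    rcases le_total (z l) P with h | h <;> simp [h]
  have hhead : ∑ l ∈ Ioc 0 i, (fqq W w η l l (max (z l) P) - fqq W w η l l P)
      ≤ potential W w η i Pmax - potential W w η i P := by
    rw [sum_sub_distrib, sum_fqq_Ioc_zero hw0,
      sum_fqq_Ioc_zero_of_eq hw0 fun l hl hli => by rw [hzconst l hl hli]]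
    have := potential_le_potential (η := η) hW.le hwi.le
      (by linarith [le_max_right (z 1) P, hη_pos i hiK]) (max_le hz.1.1 hPle)
    linarith
  rw [← sum_Ioc_consecutive _ (Nat.zero_le i) hiK] at htrunc
  linarith [hymax _ (min_mem_sicSet hz hP.le), sum_fqq_max_sub_nonpos hW.le hη_pos hP hmarg hz.1]

end Optimum

theorem stmt_9_general
    (K M : ℕ) (hM : 1 ≤ M) (W : ℝ) (hW : 0 < W)
    (w η : ℕ → ℝ) (hw0 : w 0 = 0)
    (hw : ∀ l, 1 ≤ l → l ≤ K → 0 < w l)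
    (hη_pos : ∀ l, l ≤ K → 0 < η l)
    (hη_mono : ∀ l, l < K → η (l + 1) ≤ η l)
    (Pmax P : ℝ) (hP : 0 < P) (hPle : P ≤ Pmax)
    (y : ℕ → ℝ) (hy : y ∈ sicSet K M P)
    (hymax : ∀ z ∈ sicSet K M P, objSC K W w η z ≤ objSC K W w η y)
    (i : ℕ) (hi1 : 1 ≤ i) (hiK : i ≤ K)
    (hconst : ∀ l, 1 ≤ l → l ≤ i → y l = y 1)
    (hlargest : i < K → y (i + 1) ≠ y 1) :
    (∀ l, 1 ≤ l → l ≤ i → y l = P) ∧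
    ((fun l => if l ≤ i then Pmax else y l) ∈
        {z : ℕ → ℝ | z ∈ sicSet K M Pmax ∧ ∀ l, 1 ≤ l → l ≤ i → z l = z 1} ∧
      ∀ z ∈ {z : ℕ → ℝ | z ∈ sicSet K M Pmax ∧ ∀ l, 1 ≤ l → l ≤ i → z l = z 1},
        objSC K W w η z ≤ objSC K W w η (fun l => if l ≤ i then Pmax else y l)) ∧
    (∀ l, 1 ≤ l → l ≤ K → y l = min (if l ≤ i then Pmax else y l) P) := by
  have hwi := hw i hi1 hiK
  have hdrop : i < K → y (i + 1) < y i := fun h =>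
    (hy.1.2.1 i hi1 h).lt_of_ne (by rw [hconst i hi1 le_rfl]; exact hlargest h)
  have hyP : ∀ l, 1 ≤ l → l ≤ i → y l = P := fun l hl hli =>
    (hconst l hl hli).trans
      (head_eq_budget hM hW hw0 hwi (hη_pos i hiK) hy hymax hi1 hiK hconst hdrop)
  have hiact : i ∈ activeSet K y := by
    rcases hiK.lt_or_eq with hiK' | rfl
    · exact mem_activeSet_of_lt hi1 hiK' (hdrop hiK')
    · exact mem_activeSet_self hi1 (by rw [hyP i hi1 le_rfl]; exact hP)
  have hmarg := marginal_le_of_optimal hW hw hη_pos (antitoneOn_Icc_of_succ_le fun l _ => hη_mono l)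
    hP hy hymax hi1 hyP hiact
  refine ⟨hyP, ⟨⟨⟨setHead_mem_chainSet hy.1 hi1 hiK (hy.1.1.trans hPle),
    (activeCount_setHead_le hiK hiact le_rfl Pmax).trans hy.2⟩, fun l _ hli => ?_⟩,
    fun z hz => objSC_le_objSC_setHead hW hw0 hwi hη_pos hP hPle hymax hiK hyP hmarg hz.1 hz.2⟩,
    fun l hl hlK => ?_⟩
  · simp [hli, hi1]
  · split_ifs with hli
    · rw [hyP l hl hli, min_eq_right hPle]
    · exact (min_eq_left (le_of_mem_chainSet hy.1 hl hlK)).symm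

/-- **Truncation property underlying i-SCUS.** Let `y` maximize `∑_l f_l` over the
SIC-constrained set with budget `P ≤ P_max`, and let `i` be the largest index with
`y_1 = … = y_i`. Then `y_1 = … = y_i = P`; the vector `x` equal to `P_max` on indices
`≤ i` and to `y` elsewhere maximizes `∑_l f_l` over the SIC-constrained set with budget
`P_max` restricted to `x_1 = … = x_i`; and `y_l = min (x_l) P` for every `l`. -/
theorem stmt_9
    (K M : ℕ) (hK : 1 ≤ K) (hM : 1 ≤ M) (W : ℝ) (hW : 0 < W)
    (w η : ℕ → ℝ) (hw0 : w 0 = 0)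
    (hw : ∀ l, 1 ≤ l → l ≤ K → 0 < w l)
    (hη_pos : ∀ l, l ≤ K → 0 < η l)
    (hη_mono : ∀ l, l < K → η (l + 1) ≤ η l)
    (Pmax P : ℝ) (hPmax : 0 < Pmax) (hP : 0 < P) (hPle : P ≤ Pmax)
    (y : ℕ → ℝ) (hy : y ∈ sicSet K M P)
    (hymax : ∀ z ∈ sicSet K M P, objSC K W w η z ≤ objSC K W w η y)
    (i : ℕ) (hi1 : 1 ≤ i) (hiK : i ≤ K)
    (hconst : ∀ l, 1 ≤ l → l ≤ i → y l = y 1)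
    (hlargest : i < K → y (i + 1) ≠ y 1) :
    (∀ l, 1 ≤ l → l ≤ i → y l = P) ∧
    ((fun l => if l ≤ i then Pmax else y l) ∈
        {z : ℕ → ℝ | z ∈ sicSet K M Pmax ∧ ∀ l, 1 ≤ l → l ≤ i → z l = z 1} ∧
      ∀ z ∈ {z : ℕ → ℝ | z ∈ sicSet K M Pmax ∧ ∀ l, 1 ≤ l → l ≤ i → z l = z 1},
        objSC K W w η z ≤ objSC K W w η (fun l => if l ≤ i then Pmax else y l)) ∧
    (∀ l, 1 ≤ l → l ≤ K → y l = min (if l ≤ i then Pmax else y l) P) :=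
  stmt_9_general K M hM W hW w η hw0 hw hη_pos hη_mono Pmax P hP hPle y hy hymax i hi1 hiK hconst
    hlargest
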